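/- Let p ≡ 3 (mod 4) and q ≡ 1 (mod 4) be distinct prime numbers. Then there exists a prime p' with p' ≡ 3 (mod 4) such that (p/p') = -1 and (q/p') = -1. -/

import Mathlib

/-!
By Dirichlet's theorem there is a prime `ℓ` with `ℓ ≡ 3 (mod 4)`, `ℓ ≡ 1 (mod p)` and `ℓ` a
non-residue modulo `q`, the three conditions being combined into one unit residue class
modulo `4pq` by the Chinese remainder theorem. Quadratic reciprocity then gives
`(p/ℓ) = -(ℓ/p) = -(1/p) = -1` and `(q/ℓ) = (ℓ/q) = -1`.
-/

theorem ZMod.natCast_eq_chineseRemainder_symm_iff {m n : ℕ} (hmn : m.Coprime n) (k : ℕ)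
    (a : ZMod m) (b : ZMod n) :
    (k : ZMod (m * n)) = (ZMod.chineseRemainder hmn).symm (a, b) ↔
      (k : ZMod m) = a ∧ (k : ZMod n) = b := by
  rw [RingEquiv.eq_symm_apply, map_natCast, Prod.ext_iff]
  rfl

theorem ZMod.isUnit_chineseRemainder_symm_iff {m n : ℕ} (hmn : m.Coprime n) (a : ZMod m)
    (b : ZMod n) :
    IsUnit ((ZMod.chineseRemainder hmn).symm (a, b)) ↔ IsUnit a ∧ IsUnit b := by
  rw [isUnit_map_iff, Prod.isUnit_iff]

theorem Nat.coprime_four_left_of_mod_two_eq_one {n : ℕ} (hn : n % 2 = 1) : Nat.Coprime 4 n :=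
  (Nat.coprime_two_left.2 (Nat.odd_iff.2 hn)).pow_left 2

theorem legendreSym_eq_neg_one_of_natCast_eq_one {p ℓ : ℕ} [Fact p.Prime] [Fact ℓ.Prime]
    (hp : p % 4 = 3) (hℓ : ℓ % 4 = 3) (h : (ℓ : ZMod p) = 1) : legendreSym ℓ p = -1 := by
  rw [legendreSym.quadratic_reciprocity_three_mod_four hp hℓ, legendreSym, Int.cast_natCast, h,
    map_one]

theorem legendreSym_eq_neg_one_of_not_isSquare {q ℓ : ℕ} [Fact q.Prime] [Fact ℓ.Prime]
    (hq : q % 4 = 1) (hℓ : ℓ ≠ 2) (h : ¬IsSquare (ℓ : ZMod q)) : legendreSym ℓ q = -1 := by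
  rw [legendreSym.quadratic_reciprocity_one_mod_four hq hℓ, legendreSym.eq_neg_one_iff']
  exact h

/-- Kummer's second auxiliary lemma: for distinct primes `p ≡ 3 (mod 4)` and `q ≡ 1 (mod 4)`,
there is a prime `p' ≡ 3 (mod 4)` with `(p/p') = (q/p') = -1`. -/
theorem kummer_lemma_two (p q : ℕ) (hp : p.Prime) (hq : q.Prime) (hne : p ≠ q)
    (hp4 : p % 4 = 3) (hq4 : q % 4 = 1) :
    ∃ p' : ℕ, ∃ hp' : p'.Prime, p' % 4 = 3 ∧
      @legendreSym p' ⟨hp'⟩ (p : ℤ) = -1 ∧ @legendreSym p' ⟨hp'⟩ (q : ℤ) = -1 := by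
  have : Fact p.Prime := ⟨hp⟩
  have : Fact q.Prime := ⟨hq⟩
  obtain ⟨b, hb⟩ := FiniteField.exists_nonsquare (F := ZMod q)
    (by rw [ZMod.ringChar_zmod_n]; omega)
  have h4p : Nat.Coprime 4 p :=
    Nat.coprime_four_left_of_mod_two_eq_one (Nat.odd_of_mod_four_eq_three hp4)
  have h4pq : Nat.Coprime (4 * p) q :=
    (Nat.coprime_four_left_of_mod_two_eq_one (Nat.odd_of_mod_four_eq_one hq4)).mul_left
      ((Nat.coprime_primes hp hq).2 hne)
  have hu : IsUnit ((ZMod.chineseRemainder h4pq).symm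
      ((ZMod.chineseRemainder h4p).symm (3, 1), b)) := by
    have hb0 : b ≠ 0 := by rintro rfl; exact hb IsSquare.zero
    rw [ZMod.isUnit_chineseRemainder_symm_iff, ZMod.isUnit_chineseRemainder_symm_iff]
    exact ⟨⟨by decide, isUnit_one⟩, hb0.isUnit⟩
  obtain ⟨ℓ, -, hℓ, hℓu⟩ := Nat.forall_exists_prime_gt_and_eq_mod hu 0
  rw [ZMod.natCast_eq_chineseRemainder_symm_iff, ZMod.natCast_eq_chineseRemainder_symm_iff]
    at hℓu
  obtain ⟨⟨hℓ4, hℓp⟩, hℓq⟩ := hℓu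
  have : Fact ℓ.Prime := ⟨hℓ⟩
  have hℓ4' : ℓ % 4 = 3 := (ZMod.natCast_eq_natCast_iff' ℓ 3 4).1 hℓ4
  exact ⟨ℓ, hℓ, hℓ4', legendreSym_eq_neg_one_of_natCast_eq_one hp4 hℓ4' hℓp,
    legendreSym_eq_neg_one_of_not_isSquare hq4 (by omega) (hℓq ▸ hb)⟩
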